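/- Let G be a finitely generated subgroup of germs of holomorphic diffeomorphisms of (ℂⁿ, 0) fixing the origin such that every element of G is periodic (some positive power equals the identity germ). Then G is finite. -/

import Mathlib

/-!
The derivative at the origin is a homomorphism `G → GL(n, ℂ)`, and it is injective: if a germ `f`
with `f^[k] = id` has derivative `1` at `0`, then the average `Φ = k⁻¹ ∑_{i<k} f^[i]` is a local
chart (its derivative is `1`) with `Φ ∘ f = Φ`, so `f = id`. Since every element is periodic,
`G` is then a finitely generated torsion linear group in characteristic zero, which is finite
by Schur's theorem.

For Schur's theorem, the matrix entries of the generators and their inverses generate a finitely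
generated `ℤ`-algebra `R`. It is a Jacobson domain of characteristic zero with finite residue
fields, so it has maximal ideals `m₁`, `m₂` of distinct residue characteristics, and reduction
modulo both maps `G` to a finite group. The reduction is injective: a matrix `X` with `X ^ ℓ = 1`
and `X ≡ 1 mod m`, where `ℓ ∉ m`, is `1`, because `(∑_{i<ℓ} X ^ i) (X - 1) = 0` and the first
factor is `≡ ℓ` modulo `m`, hence has nonzero determinant.
-/

open Filter Topology

instance Int.isJacobsonRing : IsJacobsonRing ℤ := by
  rw [isJacobsonRing_iff_prime_eq]
  intro P hP
  rcases eq_or_ne P ⊥ with rfl | hP0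
  · refine le_antisymm (fun x hx => ?_) Ideal.le_jacobson
    rw [Ideal.mem_jacobson_bot] at hx
    have h1 := Int.isUnit_iff.mp (hx 1)
    have h2 := Int.isUnit_iff.mp (hx 2)
    rw [Submodule.mem_bot]
    omega
  · have := hP.isMaximal hP0
    exact Ideal.jacobson_eq_self_of_isMaximal

theorem finite_of_finiteType_int (K : Type*) [Field K] [Algebra.FiniteType ℤ K] : Finite K := by
  have : Module.Finite ℤ K := finite_of_finite_type_of_isJacobsonRing ℤ K
  have hp : ringChar K ≠ 0 := fun h0 => by
    have : CharP K 0 := h0 ▸ ringChar.charP K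
    have : CharZero K := CharP.charP_to_charZero K
    exact Int.not_isField <|
      (Algebra.IsIntegral.isField_iff_isField (algebraMap ℤ K).injective_int).mpr
        (Field.toIsField K)
  have : Fact (ringChar K).Prime := ⟨(CharP.char_is_prime_or_zero K _).resolve_right hp⟩
  let := ZMod.algebra K (ringChar K)
  have : Module.Finite (ZMod (ringChar K)) K := .of_restrictScalars_finite ℤ _ K
  exact Module.finite_of_finite (ZMod (ringChar K))

theorem Ideal.exists_isMaximal_notMem {R : Type*} [CommRing R] [IsJacobsonRing R] [IsReduced R]
    {x : R} (hx : x ≠ 0) : ∃ m : Ideal R, m.IsMaximal ∧ x ∉ m := by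
  by_contra! h
  have hxJ : x ∈ (⊥ : Ideal R).jacobson := Ideal.mem_sInf.2 fun m ⟨_, hm⟩ => h m hm
  rw [← Ideal.radical_eq_jacobson] at hxJ
  obtain ⟨k, hk⟩ := hxJ
  exact hx (IsNilpotent.eq_zero ⟨k, hk⟩)

theorem Matrix.eq_one_of_pow_eq_one_of_mapMatrix_eq_one {ι R : Type*} [Fintype ι] [DecidableEq ι]
    [CommRing R] [IsDomain R] {m : Ideal R} [m.IsPrime] {ℓ : ℕ} (hℓ : (ℓ : R) ∉ m)
    {X : Matrix ι ι R} (hX : X ^ ℓ = 1) (hXm : (Ideal.Quotient.mk m).mapMatrix X = 1) : X = 1 := by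
  set M := ∑ i ∈ Finset.range ℓ, X ^ i
  have hMX : M * (X - 1) = 0 := by rw [geom_sum_mul, hX, sub_self]
  have hM : (Ideal.Quotient.mk m).mapMatrix M = (ℓ : R ⧸ m) • 1 := by
    simp only [M, map_sum, map_pow, hXm, one_pow, Finset.sum_const, Finset.card_range,
      Nat.cast_smul_eq_nsmul]
  have hdet : M.det ≠ 0 := fun h0 => by
    have h := (Ideal.Quotient.mk m).map_det M
    rw [h0, hM, map_zero, Matrix.det_smul, Matrix.det_one, mul_one, eq_comm] at h
    exact hℓ (Ideal.Quotient.eq_zero_iff_mem.mp (eq_zero_of_pow_eq_zero h))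
  have : M.det • (X - 1) = 0 := by
    rw [← smul_one_mul, ← Matrix.adjugate_mul, mul_assoc, hMX, mul_zero]
  exact sub_eq_zero.mp ((smul_eq_zero.mp this).resolve_left hdet)

section LinearGroups

variable {ι : Type*} [Fintype ι] [DecidableEq ι] {G : Type*} [Group G]

theorem Subalgebra.exists_fg_forall_mem_matrix [Group.FG G] {K : Type*} [CommRing K]
    (ρ : G →* Matrix ι ι K) : ∃ R : Subalgebra ℤ K, R.FG ∧ ∀ g, ρ g ∈ R.matrix := by
  obtain ⟨S, hS⟩ := Group.fg_def.1 ‹_›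
  set T : Set G := ↑S ∪ (↑S)⁻¹
  have hT : T.Finite := S.finite_toSet.union S.finite_toSet.inv
  set entries : Set K := (fun x : G × ι × ι => ρ x.1 x.2.1 x.2.2) '' (T ×ˢ Set.univ)
  refine ⟨Algebra.adjoin ℤ entries,
    Subalgebra.fg_def.2 ⟨_, (hT.prod Set.finite_univ).image _, rfl⟩, fun g => ?_⟩
  have hle : Submonoid.closure T ≤ (Algebra.adjoin ℤ entries).matrix.toSubmonoid.comap ρ :=
    Submonoid.closure_le.2 fun s hs i j => Algebra.subset_adjoin ⟨(s, i, j), ⟨hs, trivial⟩, rfl⟩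
  exact hle (by rw [← Subgroup.closure_toSubmonoid, hS]; trivial)

def MonoidHom.matrixRestrict {K : Type*} [CommRing K] (ρ : G →* Matrix ι ι K)
    (R : Subalgebra ℤ K) (hR : ∀ g, ρ g ∈ R.matrix) : G →* Matrix ι ι R where
  toFun g := Matrix.of fun i j => ⟨ρ g i j, hR g i j⟩
  map_one' := Matrix.map_injective Subtype.val_injective <| by
    change ρ 1 = (R.val.mapMatrix 1 : Matrix ι ι K)
    rw [map_one, map_one]
  map_mul' a b := Matrix.map_injective Subtype.val_injective <| by
    change ρ (a * b) = R.val.mapMatrix (_ * _)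
    rw [map_mul, map_mul]; rfl

theorem MonoidHom.injective_matrixRestrict {K : Type*} [CommRing K] {ρ : G →* Matrix ι ι K}
    (hρ : Function.Injective ρ) (R : Subalgebra ℤ K) (hR : ∀ g, ρ g ∈ R.matrix) :
    Function.Injective (ρ.matrixRestrict R hR) :=
  fun _ _ h => hρ (congrArg R.val.mapMatrix h)

theorem finite_of_isMulTorsion_of_injective_matrix_of_finiteType_int {R : Type*} [CommRing R]
    [IsDomain R] [CharZero R] [Algebra.FiniteType ℤ R] (hG : IsMulTorsion G) {τ : G →* Matrix ι ι R}
    (hτ : Function.Injective τ) : Finite G := by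
  have : IsJacobsonRing R := isJacobsonRing_of_finiteType (A := ℤ)
  have hfin (m : Ideal R) [m.IsMaximal] : Finite (R ⧸ m) :=
    @finite_of_finiteType_int _ (Ideal.Quotient.field m)
      (inferInstanceAs (Algebra.FiniteType ℤ (R ⧸ m)))
  obtain ⟨m₁, hm₁⟩ := Ideal.exists_maximal R
  set p := ringChar (R ⧸ m₁)
  have hp : p.Prime := CharP.char_is_prime (R ⧸ m₁) p
  obtain ⟨m₂, hm₂, hpm₂⟩ :=
    Ideal.exists_isMaximal_notMem (Nat.cast_ne_zero.2 hp.ne_zero : (p : R) ≠ 0)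
  have hcover (ℓ : ℕ) (hℓ : ℓ.Prime) : (ℓ : R) ∉ m₁ ∨ (ℓ : R) ∉ m₂ := by
    refine or_iff_not_imp_left.2 fun h₁ => ?_
    rw [not_not, ← Ideal.Quotient.eq_zero_iff_mem, map_natCast, CharP.cast_eq_zero_iff _ p,
      Nat.prime_dvd_prime_iff_eq hp hℓ] at h₁
    exact h₁ ▸ hpm₂
  let π := ((Ideal.Quotient.mk m₁).mapMatrix.toMonoidHom.comp τ).prod
    ((Ideal.Quotient.mk m₂).mapMatrix.toMonoidHom.comp τ)
  refine Finite.of_injective π ((injective_iff_map_eq_one π).2 fun g hg => ?_)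
  by_contra hg1
  obtain ⟨ℓ, hℓ, hdvd⟩ := Nat.exists_prime_and_dvd (orderOf_eq_one_iff.not.2 hg1)
  set h := g ^ (orderOf g / ℓ)
  have hh : orderOf h = ℓ := orderOf_pow_orderOf_div (hG g).orderOf_pos.ne' hdvd
  have hτh : τ h ^ ℓ = 1 := by rw [← map_pow, ← hh, pow_orderOf_eq_one, map_one]
  have hred (m : Ideal R) (hg : (Ideal.Quotient.mk m).mapMatrix (τ g) = 1) :
      (Ideal.Quotient.mk m).mapMatrix (τ h) = 1 := by
    rw [map_pow, map_pow, hg, one_pow]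
  have hτ1 : τ h = 1 := by
    rcases hcover ℓ hℓ with hℓm | hℓm
    · exact Matrix.eq_one_of_pow_eq_one_of_mapMatrix_eq_one hℓm hτh
        (hred m₁ (congrArg Prod.fst hg))
    · exact Matrix.eq_one_of_pow_eq_one_of_mapMatrix_eq_one hℓm hτh
        (hred m₂ (congrArg Prod.snd hg))
  rw [← map_one τ] at hτ1
  exact hℓ.ne_one (hh ▸ orderOf_eq_one_iff.2 (hτ hτ1))

theorem finite_of_fg_of_isMulTorsion_of_injective_matrix [Group.FG G] {K : Type*} [CommRing K]
    [IsDomain K] [CharZero K] (hG : IsMulTorsion G) {ρ : G →* Matrix ι ι K}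
    (hρ : Function.Injective ρ) : Finite G := by
  obtain ⟨R, hRfg, hR⟩ := Subalgebra.exists_fg_forall_mem_matrix ρ
  have : Algebra.FiniteType ℤ R := (Subalgebra.fg_iff_finiteType R).1 hRfg
  exact finite_of_isMulTorsion_of_injective_matrix_of_finiteType_int hG
    (ρ.injective_matrixRestrict hρ R hR)

end LinearGroups

section Germs

theorem pow_eventuallyEq_iterate {X G : Type*} [TopologicalSpace X] [Monoid G] {F : G → X → X}
    {a : X} (hone : F 1 =ᶠ[𝓝 a] id) (hmul : ∀ g h, F (g * h) =ᶠ[𝓝 a] F g ∘ F h) {g : G}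
    (hg : Tendsto (F g) (𝓝 a) (𝓝 a)) (k : ℕ) : F (g ^ k) =ᶠ[𝓝 a] (F g)^[k] := by
  induction k with
  | zero => simpa using hone
  | succ k ih =>
    rw [pow_succ, Function.iterate_succ]
    exact (hmul _ _).trans (ih.comp_tendsto hg)

variable {𝕜 E : Type*} [NontriviallyNormedField 𝕜] [NormedAddCommGroup E] [NormedSpace 𝕜 E]

theorem eventuallyEq_id_of_iterate_eventuallyEq_id [CharZero 𝕜] [CompleteSpace E] {f : E → E}
    {a : E} (hfa : f a = a) (hf : HasStrictFDerivAt f (1 : E →L[𝕜] E) a) {k : ℕ} (hk : k ≠ 0)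
    (hper : f^[k] =ᶠ[𝓝 a] id) : f =ᶠ[𝓝 a] id := by
  set Φ : E → E := fun x => (k : 𝕜)⁻¹ • ∑ i ∈ Finset.range k, f^[i] x
  have hΦ : HasStrictFDerivAt Φ (ContinuousLinearEquiv.refl 𝕜 E : E →L[𝕜] E) a := by
    have := (HasStrictFDerivAt.fun_sum (u := Finset.range k) fun i _ =>
      hf.iterate hfa i).fun_const_smul (k : 𝕜)⁻¹
    simpa [Φ, ← Nat.cast_smul_eq_nsmul 𝕜, smul_smul, hk, ← ContinuousLinearMap.one_def] using this
  have hΦf : Φ ∘ f =ᶠ[𝓝 a] Φ := by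
    filter_upwards [hper] with x hx
    simp only [Φ, Function.comp_apply, ← Function.iterate_succ_apply]
    congr 1
    have h := (Finset.sum_range_succ' (fun i => f^[i] x) k).symm.trans (Finset.sum_range_succ _ k)
    rw [hx] at h
    exact add_right_cancel h
  set ψ := hΦ.toOpenPartialHomeomorph Φ
  have hsrc : ψ.source ∈ 𝓝 a := ψ.open_source.mem_nhds hΦ.mem_toOpenPartialHomeomorph_source
  have hfa' : Tendsto f (𝓝 a) (𝓝 a) := by simpa only [hfa] using hf.continuousAt.tendsto
  filter_upwards [hsrc, hfa' hsrc, hΦf] with x hx hfx hΦx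
  exact ψ.injOn hfx hx hΦx

noncomputable def fderivMonoidHom {G : Type*} [Monoid G] (F : G → E → E) (a : E)
    (hfix : ∀ g, F g a = a) (hdiff : ∀ g, DifferentiableAt 𝕜 (F g) a) (hone : F 1 =ᶠ[𝓝 a] id)
    (hmul : ∀ g h, F (g * h) =ᶠ[𝓝 a] F g ∘ F h) : G →* E →L[𝕜] E where
  toFun g := fderiv 𝕜 (F g) a
  map_one' := by rw [hone.fderiv_eq, fderiv_id]; rfl
  map_mul' g h := by
    rw [(hmul g h).fderiv_eq, fderiv_comp a (by rw [hfix h]; exact hdiff g) (hdiff h), hfix h]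
    rfl

end Germs

/-- The group of germs is modeled by an abstract group `G` together with a faithful realization
`F` of its elements as analytic local diffeomorphisms fixing `0`, compatible with composition at
the level of germs. -/
theorem finitely_generated_group_of_periodic_germs_is_finite (n : ℕ)
    (G : Type*) [Group G] (hFG : Group.FG G)
    (F : G → (Fin n → ℂ) → (Fin n → ℂ))
    (hfix : ∀ g, F g 0 = 0)
    (han : ∀ g, AnalyticAt ℂ (F g) 0)
    (hone : F 1 =ᶠ[nhds (0 : Fin n → ℂ)] id)
    (hmul : ∀ g h : G, F (g * h) =ᶠ[nhds (0 : Fin n → ℂ)] (F g ∘ F h))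
    (hfaithful : ∀ g : G, F g =ᶠ[nhds (0 : Fin n → ℂ)] id → g = 1)
    (hper : ∀ g : G, ∃ k : ℕ, 0 < k ∧ F (g ^ k) =ᶠ[nhds (0 : Fin n → ℂ)] id) :
    Finite G := by
  set σ := fderivMonoidHom F 0 hfix (fun g => (han g).differentiableAt) hone hmul
  have hσ : Function.Injective σ := by
    refine (injective_iff_map_eq_one σ).2 fun g hg => hfaithful g ?_
    obtain ⟨k, hk, hgk⟩ := hper g
    have hstrict : HasStrictFDerivAt (F g) (1 : (Fin n → ℂ) →L[ℂ] _) 0 :=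
      hg ▸ (han g).hasStrictFDerivAt
    have hcont : Tendsto (F g) (𝓝 0) (𝓝 0) := by
      simpa only [hfix g] using (han g).continuousAt.tendsto
    exact eventuallyEq_id_of_iterate_eventuallyEq_id (hfix g) hstrict hk.ne'
      ((pow_eventuallyEq_iterate hone hmul hcont k).symm.trans hgk)
  have htors : IsMulTorsion G := fun g =>
    let ⟨k, hk, hgk⟩ := hper g
    isOfFinOrder_iff_pow_eq_one.2 ⟨k, hk, hfaithful _ hgk⟩
  let toMatrix : ((Fin n → ℂ) →L[ℂ] (Fin n → ℂ)) →* Matrix (Fin n) (Fin n) ℂ :=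
    LinearMap.toMatrixAlgEquiv'.toRingEquiv.toMonoidHom.comp
      ContinuousLinearMap.toLinearMapRingHom.toMonoidHom
  have htoMatrix : Function.Injective toMatrix :=
    LinearMap.toMatrixAlgEquiv'.injective.comp ContinuousLinearMap.coe_injective
  have : Group.FG G := hFG
  exact finite_of_fg_of_isMulTorsion_of_injective_matrix htors (ρ := toMatrix.comp σ)
    (htoMatrix.comp hσ)
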